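/- Let G be a graph and let Φ : Ω_E(G) → Ω(G′) be the map [r]_E ↦ [φ(r)] into the end space of the line graph G′. Then Φ is open onto its image: for every set T ⊆ Ω_E(G) and every edge-end ω ∈ Ω_E(G), if Φ(ω) belongs to the closure of Φ(T) in Ω(G′), then ω belongs to the closure of T in Ω_E(G). -/
import Mathlib


/-!
Formalization of definitions and a statement from
"Edge-connectivity and edge-ends in infinite graphs" (arXiv:2404.17106).
-/

universe u

namespace EdgeEndPaper

variable {V : Type u}

/-- A ray in `G`: a one-way infinite path `v₀v₁v₂…`. -/
structure Ray (G : SimpleGraph V) : Type u where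
  f : ℕ → V
  inj : Function.Injective f
  adj : ∀ n : ℕ, G.Adj (f n) (f (n + 1))

/-- A double ray in `G`: a two-way infinite path. -/
structure DoubleRay (G : SimpleGraph V) : Type u where
  f : ℤ → V
  inj : Function.Injective f
  adj : ∀ n : ℤ, G.Adj (f n) (f (n + 1))

variable (G : SimpleGraph V)

/-- The tails of the rays `r` and `s` lie in the same connected component of `G - F`
(deletion of the edges in `F`). -/
def SameComp (F : Set (Sym2 V)) (r s : Ray G) : Prop :=
  ∃ N : ℕ, ∀ m n : ℕ, N ≤ m → N ≤ n → (G.deleteEdges F).Reachable (r.f m) (s.f n)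

/-- Edge-equivalence of rays: no finite edge set separates the tails of `r` and `s`. -/
def EdgeEquiv (r s : Ray G) : Prop :=
  ∀ F : Set (Sym2 V), F.Finite → SameComp G F r s

/-- The edge-end space `Ω_E(G)`. -/
def EdgeEnd : Type u := Quot (EdgeEquiv G)

/-- The edge-end `[r]_E` of a ray `r`. -/
def Ray.edgeEnd {G : SimpleGraph V} (r : Ray G) : EdgeEnd G := Quot.mk _ r

/-- `C_E(F, ω)` : the vertices of the connected component of `G - F` in which `ω` has a tail. -/
def CE (F : Set (Sym2 V)) (ω : EdgeEnd G) : Set V :=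
  {v | ∃ r : Ray G, r.edgeEnd = ω ∧ ∃ N : ℕ, ∀ n : ℕ, N ≤ n →
    (G.deleteEdges F).Reachable (r.f n) v}

/-- `Ω_E(F, ω)` : the edge-ends whose rays have tails in the same component of `G - F`
as the rays of `ω`. -/
def OmegaE (F : Set (Sym2 V)) (ω : EdgeEnd G) : Set (EdgeEnd G) :=
  {η | ∃ r s : Ray G, r.edgeEnd = ω ∧ s.edgeEnd = η ∧ SameComp G F r s}

/-- The topology on `Ω_E(G)`, with the sets `Ω_E(F, ω)` (for finite `F ⊆ E(G)`) as a basis. -/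
def edgeEndTopology : TopologicalSpace (EdgeEnd G) :=
  .generateFrom {U | ∃ (F : Set (Sym2 V)) (ω : EdgeEnd G),
    F.Finite ∧ F ⊆ G.edgeSet ∧ U = OmegaE G F ω}

/-- `Ê(F, ω) = C_E(F, ω) ∪ Ω_E(F, ω)`, inside `Ê(G) = V(G) ⊔ Ω_E(G)`. -/
def EHatBasic (F : Set (Sym2 V)) (ω : EdgeEnd G) : Set (V ⊕ EdgeEnd G) :=
  Sum.inl '' CE G F ω ∪ Sum.inr '' OmegaE G F ω

/-- The topology on `Ê(G) = V(G) ∪ Ω_E(G)`: the vertex singletons together with the sets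
`Ê(F, ω)` (for finite `F ⊆ E(G)`) form a basis. -/
def eHatTopology : TopologicalSpace (V ⊕ EdgeEnd G) :=
  .generateFrom ({U | ∃ v : V, U = {Sum.inl v}} ∪
    {U | ∃ (F : Set (Sym2 V)) (ω : EdgeEnd G),
      F.Finite ∧ F ⊆ G.edgeSet ∧ U = EHatBasic G F ω})

/-- A vertex `v` edge-dominates the edge-end `ω` if `v ∈ C_E(F, ω)` for every finite `F`. -/
def EdgeDominates (v : V) (ω : EdgeEnd G) : Prop :=
  ∀ F : Set (Sym2 V), F.Finite → v ∈ CE G F ω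

/-- The cut `δ(X)`: the edges of `G` with one endpoint in `X` and the other outside of `X`. -/
def cut (X : Set V) : Set (Sym2 V) :=
  {e | e ∈ G.edgeSet ∧ ∃ u v : V, e = s(u, v) ∧ u ∈ X ∧ v ∉ X}

/-- `u` and `v` are connected in `G` by a walk avoiding the vertex set `S`. -/
def ReachAvoid (S : Set V) (u v : V) : Prop :=
  ∃ p : G.Walk u v, ∀ w ∈ p.support, w ∉ S

/-- The tails of `r` and `s` lie in the same component of `G - S` (vertex deletion). -/
def VSameComp (S : Set V) (r s : Ray G) : Prop :=
  ∃ N : ℕ, ∀ m n : ℕ, N ≤ m → N ≤ n → ReachAvoid G S (r.f m) (s.f n)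

/-- Equivalence of rays: no finite vertex set separates the tails of `r` and `s`. -/
def VEquiv (r s : Ray G) : Prop :=
  ∀ S : Set V, S.Finite → VSameComp G S r s

/-- The end space `Ω(G)`. -/
def VEnd : Type u := Quot (VEquiv G)

/-- The end `[r]` of a ray `r`. -/
def Ray.vEnd {G : SimpleGraph V} (r : Ray G) : VEnd G := Quot.mk _ r

/-- `C(S, ω)` : the vertices of the component of `G - S` in which `ω` has a tail. -/
def CV (S : Set V) (ω : VEnd G) : Set V :=
  {v | ∃ r : Ray G, r.vEnd = ω ∧ ∃ N : ℕ, ∀ n : ℕ, N ≤ n → ReachAvoid G S (r.f n) v}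

/-- `Ω(S, ω)` : the ends whose rays have tails in the same component of `G - S` as `ω`. -/
def OmegaV (S : Set V) (ω : VEnd G) : Set (VEnd G) :=
  {η | ∃ r s : Ray G, r.vEnd = ω ∧ s.vEnd = η ∧ VSameComp G S r s}

/-- `V̂(S, ω) = C(S, ω) ∪ Ω(S, ω)`. -/
def VHatBasic (S : Set V) (ω : VEnd G) : Set (V ⊕ VEnd G) :=
  Sum.inl '' CV G S ω ∪ Sum.inr '' OmegaV G S ω

/-- The topology on `V̂(G) = V(G) ∪ Ω(G)`: the finite vertex sets and the sets `V̂(S, ω)`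
form a basis of open sets. -/
def vHatTopology : TopologicalSpace (V ⊕ VEnd G) :=
  .generateFrom ({U | ∃ A : Set V, A.Finite ∧ U = Sum.inl '' A} ∪
    {U | ∃ (S : Set V) (ω : VEnd G), S.Finite ∧ U = VHatBasic G S ω})

/-- The topology on the end space `Ω(G)`, with the sets `Ω(S, ω)` as a basis. -/
def endTopology : TopologicalSpace (VEnd G) :=
  .generateFrom {U | ∃ (S : Set V) (ω : VEnd G), S.Finite ∧ U = OmegaV G S ω}

/-- `C` is (the vertex set of) a connected component of the graph obtained from `G` by
deleting the vertex set `S`. -/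
def CompAvoiding (S : Set V) (C : Set V) : Prop :=
  ∃ v : V, v ∉ S ∧ C = {u | ReachAvoid G S v u}

/-- The ray `φ(r)` in the line graph of `G` induced by a ray `r` of `G`: its vertices are
the consecutive edges of `r`. -/
def phiRay {G : SimpleGraph V} (r : Ray G) : Ray G.lineGraph where
  f n := ⟨s(r.f n, r.f (n + 1)), G.mem_edgeSet.mpr (r.adj n)⟩
  inj a b h := by
    have h' : s(r.f a, r.f (a + 1)) = s(r.f b, r.f (b + 1)) := congrArg Subtype.val h
    rcases Sym2.eq_iff.mp h' with ⟨h1, _⟩ | ⟨h1, h2⟩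
    · exact r.inj h1
    · have e1 := r.inj h1
      have e2 := r.inj h2
      omega
  adj n := by
    refine SimpleGraph.lineGraph_adj_iff_exists.mpr ⟨?_, r.f (n + 1), ?_, ?_⟩
    · intro h
      have h' : s(r.f n, r.f (n + 1)) = s(r.f (n + 1), r.f (n + 2)) :=
        congrArg Subtype.val h
      rcases Sym2.eq_iff.mp h' with ⟨h1, _⟩ | ⟨h1, _⟩
      · have := r.inj h1; omega
      · have := r.inj h1; omega
    · exact Sym2.mem_iff.mpr (Or.inr rfl)
    · exact Sym2.mem_iff.mpr (Or.inl rfl)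

/-! ### Auxiliary lemmas -/

section Aux

variable {G}

lemma reachAvoid_refl {S : Set V} {v : V} (hv : v ∉ S) : ReachAvoid G S v v :=
  ⟨SimpleGraph.Walk.nil, by simp [hv]⟩

lemma reachAvoid_symm {S : Set V} {u v : V} (h : ReachAvoid G S u v) : ReachAvoid G S v u := by
  obtain ⟨p, hp⟩ := h
  exact ⟨p.reverse, by simpa using hp⟩

lemma reachAvoid_trans {S : Set V} {u v w : V} (h1 : ReachAvoid G S u v)
    (h2 : ReachAvoid G S v w) : ReachAvoid G S u w := by
  obtain ⟨p, hp⟩ := h1; obtain ⟨q, hq⟩ := h2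
  refine ⟨p.append q, fun x hx => ?_⟩
  rcases (SimpleGraph.Walk.mem_support_append_iff p q).mp hx with h | h
  · exact hp x h
  · exact hq x h

lemma ray_reachAvoid (r : Ray G) {S : Set V} (hS : S.Finite) :
    ∃ N : ℕ, ∀ m n : ℕ, N ≤ m → N ≤ n → ReachAvoid G S (r.f m) (r.f n) := by
  obtain ⟨N, hN⟩ : ∃ N : ℕ, ∀ k, N ≤ k → r.f k ∉ S := by
    have hfin : (r.f ⁻¹' S).Finite := hS.preimage r.inj.injOn
    obtain ⟨N, hN⟩ := hfin.bddAbove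
    exact ⟨N + 1, fun k hk hkS => by have := hN hkS; omega⟩
  have key : ∀ m, N ≤ m → ∀ k, ReachAvoid G S (r.f m) (r.f (m + k)) := by
    intro m hm k
    induction k with
    | zero => exact reachAvoid_refl (hN m hm)
    | succ k ih =>
      refine reachAvoid_trans ih ⟨(r.adj (m + k)).toWalk, ?_⟩
      intro x hx
      simp only [SimpleGraph.Adj.toWalk, SimpleGraph.Walk.support_cons,
        SimpleGraph.Walk.support_nil, List.mem_cons, List.mem_singleton] at hx
      rcases hx with rfl | hx
      · exact hN _ (by omega)
      · rcases hx with rfl | h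
        · exact hN _ (by omega)
        · simp at h
  refine ⟨N, fun m n hm hn => ?_⟩
  rcases le_total m n with h | h
  · have := key m hm (n - m); rwa [Nat.add_sub_cancel' h] at this
  · have := key n hn (m - n); rw [Nat.add_sub_cancel' h] at this
    exact reachAvoid_symm this

lemma vSameComp_symm {S : Set V} {r s : Ray G} (h : VSameComp G S r s) : VSameComp G S s r := by
  obtain ⟨N, hN⟩ := h
  exact ⟨N, fun m n hm hn => reachAvoid_symm (hN n m hn hm)⟩

lemma vSameComp_trans {S : Set V} {r s t : Ray G} (h1 : VSameComp G S r s)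
    (h2 : VSameComp G S s t) : VSameComp G S r t := by
  obtain ⟨N₁, hN₁⟩ := h1; obtain ⟨N₂, hN₂⟩ := h2
  refine ⟨max N₁ N₂, fun m n hm hn => ?_⟩
  exact reachAvoid_trans (hN₁ m (max N₁ N₂) (le_trans (le_max_left _ _) hm) (le_max_left _ _))
    (hN₂ (max N₁ N₂) n (le_max_right _ _) (le_trans (le_max_right _ _) hn))

lemma vEquiv_equivalence : Equivalence (VEquiv G) where
  refl r := fun S hS => by
    obtain ⟨N, hN⟩ := ray_reachAvoid r hS
    exact ⟨N, hN⟩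
  symm h := fun S hS => vSameComp_symm (h S hS)
  trans h1 h2 := fun S hS => vSameComp_trans (h1 S hS) (h2 S hS)

lemma vEnd_eq_iff {r s : Ray G} (h : r.vEnd = s.vEnd) : VEquiv G r s :=
  (vEquiv_equivalence.eqvGen_iff).mp (Quot.eq.mp h)

/-- Injectivity of the consecutive-edges map of a ray. -/
lemma ray_edge_inj (r : Ray G) :
    Function.Injective (fun k : ℕ => s(r.f k, r.f (k + 1))) := by
  intro a b h'
  rcases Sym2.eq_iff.mp h' with ⟨h1, _⟩ | ⟨h1, h2⟩
  · exact r.inj h1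
  · have e1 := r.inj h1
    have e2 := r.inj h2
    omega

lemma ray_sameComp_refl (r : Ray G) {F : Set (Sym2 V)} (hF : F.Finite) : SameComp G F r r := by
  obtain ⟨N, hN⟩ : ∃ N : ℕ, ∀ k, N ≤ k → s(r.f k, r.f (k + 1)) ∉ F := by
    have hfin : ((fun k : ℕ => s(r.f k, r.f (k + 1))) ⁻¹' F).Finite :=
      hF.preimage (ray_edge_inj r).injOn
    obtain ⟨N, hN⟩ := hfin.bddAbove
    exact ⟨N + 1, fun k hk hkF => by have := hN hkF; omega⟩
  have key : ∀ m, N ≤ m → ∀ k, (G.deleteEdges F).Reachable (r.f m) (r.f (m + k)) := by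
    intro m hm k
    induction k with
    | zero => exact SimpleGraph.Reachable.refl _
    | succ k ih =>
      refine ih.trans (SimpleGraph.Adj.reachable ?_)
      exact SimpleGraph.deleteEdges_adj.mpr ⟨r.adj (m + k), hN _ (by omega)⟩
  refine ⟨N, fun m n hm hn => ?_⟩
  rcases le_total m n with h | h
  · have := key m hm (n - m); rwa [Nat.add_sub_cancel' h] at this
  · have := key n hn (m - n); rw [Nat.add_sub_cancel' h] at this
    exact this.symm

lemma sameComp_symm {F : Set (Sym2 V)} {r s : Ray G} (h : SameComp G F r s) :
    SameComp G F s r := by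
  obtain ⟨N, hN⟩ := h
  exact ⟨N, fun m n hm hn => (hN n m hn hm).symm⟩

lemma sameComp_trans {F : Set (Sym2 V)} {r s t : Ray G} (h1 : SameComp G F r s)
    (h2 : SameComp G F s t) : SameComp G F r t := by
  obtain ⟨N₁, hN₁⟩ := h1; obtain ⟨N₂, hN₂⟩ := h2
  refine ⟨max N₁ N₂, fun m n hm hn => ?_⟩
  exact (hN₁ m (max N₁ N₂) (le_trans (le_max_left _ _) hm) (le_max_left _ _)).trans
    (hN₂ (max N₁ N₂) n (le_max_right _ _) (le_trans (le_max_right _ _) hn))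

lemma sameComp_mono {F₁ F₂ : Set (Sym2 V)} (hsub : F₁ ⊆ F₂) {r s : Ray G}
    (h : SameComp G F₂ r s) : SameComp G F₁ r s := by
  obtain ⟨N, hN⟩ := h
  exact ⟨N, fun m n hm hn => (hN m n hm hn).mono (SimpleGraph.deleteEdges_anti hsub)⟩

lemma edgeEquiv_equivalence : Equivalence (EdgeEquiv G) where
  refl r := fun F hF => ray_sameComp_refl r hF
  symm h := fun F hF => sameComp_symm (h F hF)
  trans h1 h2 := fun F hF => sameComp_trans (h1 F hF) (h2 F hF)

lemma edgeEnd_eq_iff {r s : Ray G} (h : r.edgeEnd = s.edgeEnd) : EdgeEquiv G r s :=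
  (edgeEquiv_equivalence.eqvGen_iff).mp (Quot.eq.mp h)

lemma mem_omegaE_self {F : Set (Sym2 V)} (hF : F.Finite) (ω : EdgeEnd G) :
    ω ∈ OmegaE G F ω := by
  obtain ⟨r, rfl⟩ := Quot.exists_rep ω
  exact ⟨r, r, rfl, rfl, ray_sameComp_refl r hF⟩

lemma omegaE_mono {F₁ F₂ : Set (Sym2 V)} (hsub : F₁ ⊆ F₂) (ω : EdgeEnd G) :
    OmegaE G F₂ ω ⊆ OmegaE G F₁ ω := by
  rintro η ⟨r, s, h1, h2, hc⟩
  exact ⟨r, s, h1, h2, sameComp_mono hsub hc⟩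

lemma omegaE_subset_of_mem {F : Set (Sym2 V)} (hF : F.Finite) {ω ω' : EdgeEnd G}
    (hω : ω ∈ OmegaE G F ω') : OmegaE G F ω ⊆ OmegaE G F ω' := by
  obtain ⟨r, s, hr, hs, hrs⟩ := hω
  rintro η ⟨r₂, s₂, hr₂, hs₂, hr₂s₂⟩
  have hsr₂ : EdgeEquiv G s r₂ := edgeEnd_eq_iff (hs.trans hr₂.symm)
  exact ⟨r, s₂, hr, hs₂, sameComp_trans (sameComp_trans hrs (hsr₂ F hF)) hr₂s₂⟩

lemma exists_basic_subset {U : Set (EdgeEnd G)} (hU : (edgeEndTopology G).IsOpen U)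
    {ω : EdgeEnd G} (hω : ω ∈ U) :
    ∃ F : Set (Sym2 V), F.Finite ∧ OmegaE G F ω ⊆ U := by
  have hU' : TopologicalSpace.GenerateOpen
      {U | ∃ (F : Set (Sym2 V)) (ω : EdgeEnd G),
        F.Finite ∧ F ⊆ G.edgeSet ∧ U = OmegaE G F ω} U := hU
  clear hU
  induction hU' with
  | basic U hUb =>
    obtain ⟨F, ω', hF, _, rfl⟩ := hUb
    exact ⟨F, hF, omegaE_subset_of_mem hF hω⟩
  | univ => exact ⟨∅, Set.finite_empty, Set.subset_univ _⟩
  | inter U₁ U₂ _ _ ih1 ih2 =>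
    obtain ⟨F₁, hF₁, hs₁⟩ := ih1 hω.1
    obtain ⟨F₂, hF₂, hs₂⟩ := ih2 hω.2
    refine ⟨F₁ ∪ F₂, hF₁.union hF₂, fun η hη => ?_⟩
    exact ⟨hs₁ (omegaE_mono Set.subset_union_left ω hη),
      hs₂ (omegaE_mono Set.subset_union_right ω hη)⟩
  | sUnion S _ ih =>
    obtain ⟨U', hU', hωU'⟩ := hω
    obtain ⟨F, hF, hs⟩ := ih U' hU' hωU'
    exact ⟨F, hF, hs.trans (Set.subset_sUnion_of_mem hU')⟩

/-- Key combinatorial step: a walk in the line graph whose support avoids `F` yields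
reachability in `G - F` between endpoints of the end edges. -/
lemma lineWalk_reach {F : Set (Sym2 V)} :
    ∀ {e e' : G.edgeSet} (p : G.lineGraph.Walk e e'),
      (∀ x ∈ p.support, (x : Sym2 V) ∉ F) →
      ∀ {u u' : V}, u ∈ (e : Sym2 V) → u' ∈ (e' : Sym2 V) →
      (G.deleteEdges F).Reachable u u' := by
  have step : ∀ (e : G.edgeSet), (e : Sym2 V) ∉ F → ∀ {u w : V},
      u ∈ (e : Sym2 V) → w ∈ (e : Sym2 V) → (G.deleteEdges F).Reachable u w := by
    rintro ⟨e, he⟩ heF u w hu hw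
    induction e using Sym2.inductionOn with
    | hf a b =>
      have hab : G.Adj a b := G.mem_edgeSet.mp he
      have hadj : (G.deleteEdges F).Adj a b := SimpleGraph.deleteEdges_adj.mpr ⟨hab, heF⟩
      rcases Sym2.mem_iff.mp hu with rfl | rfl <;> rcases Sym2.mem_iff.mp hw with rfl | rfl
      · exact SimpleGraph.Reachable.refl _
      · exact hadj.reachable
      · exact hadj.symm.reachable
      · exact SimpleGraph.Reachable.refl _
  intro e e' p
  induction p with
  | nil =>
    intro hp u u' hu hu'
    exact step _ (hp _ (by simp)) hu hu'
  | @cons e₁ e₂ e₃ hadj q ih =>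
    intro hp u u' hu hu'
    obtain ⟨-, w, hw₁, hw₂⟩ := SimpleGraph.lineGraph_adj_iff_exists.mp hadj
    have h1 : (G.deleteEdges F).Reachable u w :=
      step e₁ (hp _ (by simp)) hu hw₁
    have h2 : (G.deleteEdges F).Reachable w u' :=
      ih (fun x hx => hp x (by simp [hx])) hw₂ hu'
    exact h1.trans h2

lemma vSameComp_phi {F : Set (Sym2 V)} {r t : Ray G}
    (h : VSameComp G.lineGraph {x : G.edgeSet | (x : Sym2 V) ∈ F} (phiRay r) (phiRay t)) :
    SameComp G F r t := by
  obtain ⟨N, hN⟩ := h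
  refine ⟨N, fun m n hm hn => ?_⟩
  obtain ⟨p, hp⟩ := hN m n hm hn
  refine lineWalk_reach p (fun x hx => hp x hx) ?_ ?_
  · exact Sym2.mem_iff.mpr (Or.inl rfl)
  · exact Sym2.mem_iff.mpr (Or.inl rfl)

end Aux

/-- The natural map `Φ : Ω_E(G) → Ω(G')` into the end space of the line graph is open
onto its image: if `Φ(ω)` lies in the closure of `Φ(T)`, then `ω` lies in the closure
of `T`. -/
theorem phi_open_onto_image (Φ : EdgeEnd G → VEnd G.lineGraph)
    (hΦ : ∀ r : Ray G, Φ r.edgeEnd = (phiRay r).vEnd)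
    (T : Set (EdgeEnd G)) (ω : EdgeEnd G)
    (h : Φ ω ∈ @closure _ (endTopology G.lineGraph) (Φ '' T)) :
    ω ∈ @closure _ (edgeEndTopology G) T := by
  letI tE : TopologicalSpace (EdgeEnd G) := edgeEndTopology G
  letI tV : TopologicalSpace (VEnd G.lineGraph) := endTopology G.lineGraph
  rw [mem_closure_iff]
  intro U hU hωU
  obtain ⟨F, hF, hFsub⟩ := exists_basic_subset hU hωU
  -- the corresponding finite vertex set in the line graph
  set S : Set (G.edgeSet) := {x : G.edgeSet | (x : Sym2 V) ∈ F} with hS_def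
  have hSfin : S.Finite := hF.preimage Subtype.val_injective.injOn
  -- the basic open set around Φ ω
  have hopen : tV.IsOpen (OmegaV G.lineGraph S (Φ ω)) :=
    TopologicalSpace.GenerateOpen.basic _ ⟨S, Φ ω, hSfin, rfl⟩
  obtain ⟨r, rfl⟩ := Quot.exists_rep ω
  have hmem : Φ (Ray.edgeEnd r) ∈ OmegaV G.lineGraph S (Φ (Ray.edgeEnd r)) := by
    obtain ⟨N, hN⟩ := ray_reachAvoid (phiRay r) hSfin
    exact ⟨phiRay r, phiRay r, (hΦ r).symm, (hΦ r).symm, N, hN⟩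
  obtain ⟨x, hxΩ, hxT⟩ := (mem_closure_iff.mp h) _ hopen hmem
  obtain ⟨τ, hτT, rfl⟩ := hxT
  refine ⟨τ, hFsub ?_, hτT⟩
  -- show τ ∈ OmegaE G F ω
  obtain ⟨t, rfl⟩ := Quot.exists_rep τ
  obtain ⟨r', s', hr', hs', hrs'⟩ := hxΩ
  have h1 : VEquiv G.lineGraph (phiRay r) r' := vEnd_eq_iff ((hΦ r).symm.trans hr'.symm)
  have h2 : VEquiv G.lineGraph s' (phiRay t) := vEnd_eq_iff (hs'.trans (hΦ t))
  have hmain : VSameComp G.lineGraph S (phiRay r) (phiRay t) :=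
    vSameComp_trans (vSameComp_trans (h1 S hSfin) hrs') (h2 S hSfin)
  exact ⟨r, t, rfl, rfl, vSameComp_phi hmain⟩

end EdgeEndPaper
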